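/- Let Φ_F = {±e_i : 1 ≤ i ≤ 4} ∪ {±e_i ± e_j : 1 ≤ i < j ≤ 4} ∪ {(±1/2, ±1/2, ±1/2, ±1/2)} be the set of roots of type F_4 in ℝ^4, and let M = {a ∈ ℤ^4 : a_1 + a_2 + a_3 + a_4 is even}. For every odd integer q ≥ 1, the number of points u ∈ M satisfying |⟨u, v⟩| ≤ q for all v ∈ Φ_F equals q^4 + 2q^3 + 2q^2 − 2q − 2. In particular, for every integer q ≥ 2, the number of points of M in the interior of the dilate q·F (equivalently, satisfying |⟨u, v⟩| ≤ q − 1 for all v ∈ Φ_F) is strictly less than q^4. -/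

import Mathlib

open Finset

/-- The `i`-th standard basis vector of `ℝ^n`. -/
noncomputable def stdBasis (n : ℕ) (i : Fin n) : Fin n → ℝ := fun j => if j = i then 1 else 0

/-- The standard inner product on `ℝ^n`. -/
noncomputable def innerProd {n : ℕ} (u v : Fin n → ℝ) : ℝ := ∑ i, u i * v i

/-- The roots of type `F_4`: `±e_i`, `±e_i ± e_j` for `i < j`, and `(±1/2, ±1/2, ±1/2, ±1/2)`. -/
noncomputable def typeF : Set (Fin 4 → ℝ) :=
  {v | ∃ i, v = stdBasis 4 i ∨ v = -stdBasis 4 i} ∪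
  {v | ∃ i j, i < j ∧ ∃ ε δ : ℝ, (ε = 1 ∨ ε = -1) ∧ (δ = 1 ∨ δ = -1) ∧
    v = ε • stdBasis 4 i + δ • stdBasis 4 j} ∪
  {v | ∀ i, v i = 1/2 ∨ v i = -1/2}

/-- The dual lattice of the `F_4` root lattice: integer vectors with even coordinate sum. -/
def evenLattice : Set (Fin 4 → ℝ) :=
  {a | (∀ i, ∃ m : ℤ, a i = m) ∧ ∃ m : ℤ, ∑ i, a i = 2 * m}

/-!
The roots `±e_i ± e_j` turn `|⟨u, v⟩| ≤ q` into the conditions `|u_i| + |u_j| ≤ q` for `i ≠ j`,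
and these already imply the bounds for the roots `±e_i` and `(±1/2, …, ±1/2)`. So we count
even-sum integer vectors with `|u_i| + |u_j| ≤ q`. At most one coordinate of such a vector
satisfies `2|u_i| > q`. If there is none, the vector is an arbitrary even-sum point of the cube
`[-⌊q/2⌋, ⌊q/2⌋]^4`; if `u_i = ±(q - k)` is the large one, the remaining coordinates form an
arbitrary point of `[-k, k]^3` with the right parity. Parity-restricted counts in a cube
`[-K, K]^m` come from the signed count `∑ (-1)^(x_1 + ⋯ + x_m) = ((-1)^K)^m`.
-/

lemma Int.negOnePow_sum {ι : Type*} (s : Finset ι) (f : ι → ℤ) :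
    (∑ i ∈ s, f i).negOnePow = ∏ i ∈ s, (f i).negOnePow := by
  induction s using Finset.cons_induction with
  | empty => simp
  | cons a s ha ih => rw [sum_cons, prod_cons, Int.negOnePow_add, ih]

lemma Int.negOnePow_natCast_mul (m : ℕ) (K : ℤ) : (m * K).negOnePow = K.negOnePow ^ m := by
  rw [Int.negOnePow_def, Int.negOnePow_def, mul_comm, zpow_mul, zpow_natCast]

lemma sum_Icc_negOnePow {K : ℤ} (hK : 0 ≤ K) :
    ∑ t ∈ Icc (-K) K, (t.negOnePow : ℤ) = K.negOnePow := by
  induction K, hK using Int.leInduction with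
  | base => simp
  | succ K hK ih =>
    have hIcc : Icc (-(K + 1)) (K + 1)
        = cons (-(K + 1)) (cons (K + 1) (Icc (-K) K) (by simp))
            (by simp only [mem_cons, mem_Icc]; omega) := by
      ext t; simp only [mem_cons, mem_Icc]; omega
    rw [hIcc, sum_cons, sum_cons, ih, Int.negOnePow_neg, Int.negOnePow_succ]
    push_cast; ring

noncomputable def intCube (m : ℕ) (K : ℤ) : Finset (Fin m → ℤ) :=
  Fintype.piFinset fun _ => Icc (-K) K

lemma card_intCube (m : ℕ) {K : ℤ} (hK : 0 ≤ K) : (#(intCube m K) : ℤ) = (2 * K + 1) ^ m := by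
  rw [intCube, Fintype.card_piFinset, prod_const, card_univ, Fintype.card_fin, Int.card_Icc]
  push_cast
  rw [Int.toNat_of_nonneg (by omega)]
  ring_nf

lemma two_mul_card_filter_even_intCube (m : ℕ) {K : ℤ} (hK : 0 ≤ K) (e : ℤ) :
    2 * (#{x ∈ intCube m K | Even (e + ∑ i, x i)} : ℤ)
      = (2 * K + 1) ^ m + (e + m * K).negOnePow := by
  have hindicator : ∀ z : ℤ, 2 * (if Even z then 1 else 0 : ℤ) = 1 + z.negOnePow := by
    intro z
    rcases Int.even_or_odd z with hz | hz
    · simp [hz, Int.negOnePow_even z hz]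
    · simp [Int.not_even_iff_odd.mpr hz, Int.negOnePow_odd z hz]
  have hsigned :
      ∑ x ∈ intCube m K, ((e + ∑ i, x i).negOnePow : ℤ) = (e + m * K).negOnePow := by
    simp_rw [Int.negOnePow_add, Int.negOnePow_sum, Int.negOnePow_natCast_mul]
    push_cast
    rw [← mul_sum, intCube,
      ← prod_univ_sum (fun _ => Icc (-K) K) (fun _ t => (t.negOnePow : ℤ))]
    simp [sum_Icc_negOnePow hK]
  rw [card_filter, Nat.cast_sum, mul_sum]
  push_cast
  simp_rw [hindicator, sum_add_distrib, hsigned]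
  simp [card_intCube m hK]

noncomputable def evenPairBounded (m : ℕ) (n : ℤ) : Finset (Fin m → ℤ) :=
  {x ∈ intCube m n | Even (∑ i, x i) ∧ ∀ i j, i ≠ j → |x i| + |x j| ≤ n}

lemma forall_ne_abs_insertNth_add_le_iff {m : ℕ} {n a : ℤ} (ha : n < 2 * |a|)
    (i : Fin (m + 1)) (y : Fin m → ℤ) :
    (∀ k l, k ≠ l →
      |(i.insertNth a y : Fin (m + 1) → ℤ) k| + |(i.insertNth a y : Fin (m + 1) → ℤ) l| ≤ n)
      ↔ ∀ j, |y j| ≤ n - |a| := by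
  constructor
  · intro h j
    have := h i (i.succAbove j) (Fin.succAbove_ne i j).symm
    simp only [Fin.insertNth_apply_same, Fin.insertNth_apply_succAbove] at this
    linarith
  · intro h k l hkl
    rcases i.eq_self_or_eq_succAbove k with hk | ⟨j, hk⟩ <;>
      rcases i.eq_self_or_eq_succAbove l with hl | ⟨j', hl⟩ <;>
      simp only [hk, hl, Fin.insertNth_apply_same, Fin.insertNth_apply_succAbove]
    · exact absurd (hk.trans hl.symm) hkl
    · linarith [h j']
    · linarith [h j]
    · linarith [h j, h j']

lemma insertNth_mem_evenPairBounded_iff {m : ℕ} {n a : ℤ} (ha : n < 2 * |a|) (ha' : |a| ≤ n)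
    (i : Fin (m + 1)) (y : Fin m → ℤ) :
    i.insertNth a y ∈ evenPairBounded (m + 1) n
      ↔ y ∈ intCube m (n - |a|) ∧ Even (a + ∑ j, y j) := by
  simp only [evenPairBounded, mem_filter, forall_ne_abs_insertNth_add_le_iff ha]
  simp only [intCube, Fintype.mem_piFinset, mem_Icc, Fin.sum_univ_succAbove _ i,
    Fin.insertNth_apply_same, Fin.insertNth_apply_succAbove, Fin.forall_iff_succAbove i, ← abs_le]
  refine ⟨fun ⟨_, heven, hy⟩ => ⟨hy, heven⟩,
    fun ⟨hy, heven⟩ => ⟨⟨ha', fun j => ?_⟩, heven, hy⟩⟩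
  linarith [hy j, abs_nonneg a]

lemma card_filter_evenPairBounded_apply_eq {m : ℕ} {n a : ℤ} (ha : n < 2 * |a|) (ha' : |a| ≤ n)
    (i : Fin (m + 1)) :
    #{x ∈ evenPairBounded (m + 1) n | x i = a}
      = #{y ∈ intCube m (n - |a|) | Even (a + ∑ j, y j)} := by
  symm
  refine card_nbij' (fun y => (i.insertNth a y : Fin (m + 1) → ℤ)) i.removeNth
    (fun y hy => ?_) (fun x hx => ?_)
    (fun y _ => Fin.removeNth_insertNth (α := fun _ => ℤ) i a y) (fun x hx => ?_)
  · rw [mem_coe, mem_filter] at hy ⊢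
    exact ⟨(insertNth_mem_evenPairBounded_iff ha ha' i y).mpr hy,
      Fin.insertNth_apply_same (α := fun _ => ℤ) i a y⟩
  · rw [mem_coe, mem_filter] at hx ⊢
    rw [← hx.2, ← insertNth_mem_evenPairBounded_iff (hx.2 ▸ ha) (hx.2 ▸ ha'),
      Fin.insertNth_self_removeNth]
    exact hx.1
  · rw [mem_coe, mem_filter] at hx
    dsimp only
    rw [← hx.2, Fin.insertNth_self_removeNth]

lemma card_filter_evenPairBounded_lt_abs {m : ℕ} (n : ℤ) (i : Fin (m + 1)) :
    #{x ∈ evenPairBounded (m + 1) n | n < 2 * |x i|}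
      = ∑ a ∈ Icc (-n) n with n < 2 * |a|, #{y ∈ intCube m (n - |a|) | Even (a + ∑ j, y j)} := by
  rw [card_eq_sum_card_fiberwise (f := fun x => x i) (t := {a ∈ Icc (-n) n | n < 2 * |a|})]
  · refine sum_congr rfl fun a ha => ?_
    rw [mem_filter, mem_Icc, ← abs_le] at ha
    rw [filter_filter, ← card_filter_evenPairBounded_apply_eq ha.2 ha.1 i]
    congr 1
    exact filter_congr fun x _ => ⟨fun h => h.2, fun h => ⟨h ▸ ha.2, h⟩⟩
  · intro x hx
    simp only [evenPairBounded, intCube, mem_coe, mem_filter, Fintype.mem_piFinset] at hx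
    exact mem_filter.mpr ⟨hx.1.1 i, hx.2⟩

lemma card_evenPairBounded_succ (m : ℕ) (n : ℤ) :
    #(evenPairBounded (m + 1) n) = #{x ∈ intCube (m + 1) (n / 2) | Even (∑ i, x i)}
      + (m + 1) * ∑ a ∈ Icc (-n) n with n < 2 * |a|,
          #{y ∈ intCube m (n - |a|) | Even (a + ∑ j, y j)} := by
  rw [← card_filter_add_card_filter_not (s := evenPairBounded (m + 1) n)
    (fun x => ∃ i, n < 2 * |x i|), add_comm]
  congr 1
  · congr 1
    ext x
    simp only [evenPairBounded, intCube, mem_filter, Fintype.mem_piFinset, mem_Icc, not_exists,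
      not_lt, Int.abs_eq_natAbs]
    constructor
    · rintro ⟨⟨-, heven, -⟩, hsmall⟩
      exact ⟨fun i => by have := hsmall i; omega, heven⟩
    · rintro ⟨hcube, heven⟩
      refine ⟨⟨fun i => by have := hcube i; omega, heven, fun i j _ => ?_⟩, fun i => ?_⟩
      · have := hcube i; have := hcube j; omega
      · have := hcube i; omega
  · have hunion : {x ∈ evenPairBounded (m + 1) n | ∃ i, n < 2 * |x i|}
        = univ.biUnion fun i => {x ∈ evenPairBounded (m + 1) n | n < 2 * |x i|} := by
      ext x; simp
    have hdisj : ((univ : Finset (Fin (m + 1))) : Set (Fin (m + 1))).PairwiseDisjoint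
        fun i => {x ∈ evenPairBounded (m + 1) n | n < 2 * |x i|} := by
      intro i _ j _ hij
      refine disjoint_left.mpr fun x hxi hxj => ?_
      simp only [evenPairBounded, mem_filter] at hxi hxj
      linarith [hxi.1.2.2 i j hij]
    rw [hunion, card_biUnion hdisj]
    simp [card_filter_evenPairBounded_lt_abs]

lemma sum_filter_lt_two_mul_abs {M : Type*} [AddCommMonoid M] (n : ℕ) (f : ℤ → M)
    (hf : ∀ a, f (-a) = f a) :
    ∑ a ∈ Icc (-(n : ℤ)) n with (n : ℤ) < 2 * |a|, f a
      = 2 • ∑ k ∈ range (n - n / 2), f (n - k) := by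
  rw [← sum_filter_add_sum_filter_not _ (fun a => 0 < a), two_smul, filter_filter, filter_filter]
  congr 1
  · refine sum_nbij' (fun a => (n - a).toNat) (fun k => n - k) ?_ ?_ ?_ ?_ ?_ <;>
      intro a ha <;> simp only [mem_filter, mem_Icc, mem_range, Int.abs_eq_natAbs] at ha ⊢
    any_goals omega
    rw [Int.toNat_of_nonneg (by omega), sub_sub_cancel]
  · refine sum_nbij' (fun a => (n + a).toNat) (fun k => k - n) ?_ ?_ ?_ ?_ ?_ <;>
      intro a ha <;> simp only [mem_filter, mem_Icc, mem_range, Int.abs_eq_natAbs] at ha ⊢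
    any_goals omega
    rw [Int.toNat_of_nonneg (by omega), ← hf, sub_add_cancel_left]

lemma sum_range_odd_pow_three (N : ℕ) :
    ∑ k ∈ range N, (2 * (k : ℤ) + 1) ^ 3 = (N : ℤ) ^ 2 * (2 * N ^ 2 - 1) := by
  induction N with
  | zero => simp
  | succ N ih => rw [sum_range_succ, ih]; push_cast; ring

lemma two_mul_card_evenPairBounded_four (n : ℕ) :
    2 * (#(evenPairBounded 4 n) : ℤ) = (2 * (n / 2 : ℕ) + 1) ^ 4 + 1
      + 8 * ((n - n / 2 : ℕ) ^ 2 * (2 * (n - n / 2 : ℕ) ^ 2 - 1)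
        + (n - n / 2 : ℕ) * (n : ℤ).negOnePow) := by
  have hsym : ∀ a : ℤ, #{y ∈ intCube 3 (n - |-a|) | Even (-a + ∑ j, y j)}
      = #{y ∈ intCube 3 (n - |a|) | Even (a + ∑ j, y j)} := fun a => by
    simp [abs_neg, Int.even_add]
  have hfiber : ∀ k ∈ range (n - n / 2),
      2 * (#{y ∈ intCube 3 (n - |(n : ℤ) - k|) | Even ((n - k : ℤ) + ∑ j, y j)} : ℤ)
        = (2 * k + 1) ^ 3 + (n : ℤ).negOnePow := fun k hk => by
    rw [mem_range] at hk
    rw [abs_of_nonneg (by omega), sub_sub_cancel,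
      two_mul_card_filter_even_intCube 3 (Nat.cast_nonneg k),
      show (n : ℤ) - k + (3 : ℕ) * k = n + 2 * k by push_cast; ring, Int.negOnePow_add,
      Int.negOnePow_two_mul, mul_one]
  have hsmall := two_mul_card_filter_even_intCube 4 (Nat.cast_nonneg (n / 2)) 0
  rw [show (0 : ℤ) + (4 : ℕ) * (n / 2 : ℕ) = 2 * (2 * (n / 2 : ℕ)) by push_cast; ring,
    Int.negOnePow_two_mul] at hsmall
  simp only [zero_add] at hsmall
  rw [card_evenPairBounded_succ, sum_filter_lt_two_mul_abs n _ hsym]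
  have hsum : 2 * ∑ k ∈ range (n - n / 2),
      (#{y ∈ intCube 3 (n - |(n : ℤ) - k|) | Even ((n - k : ℤ) + ∑ j, y j)} : ℤ)
        = (n - n / 2 : ℕ) ^ 2 * (2 * (n - n / 2 : ℕ) ^ 2 - 1)
          + (n - n / 2 : ℕ) * (n : ℤ).negOnePow := by
    rw [mul_sum, sum_congr rfl hfiber, sum_add_distrib, sum_range_odd_pow_three, sum_const,
      card_range, nsmul_eq_mul]
  push_cast [smul_eq_mul] at hsmall hsum ⊢
  linear_combination hsmall + 8 * hsum

lemma card_evenPairBounded_four_of_odd {q : ℕ} (hq : Odd q) :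
    (#(evenPairBounded 4 q) : ℤ) = (q : ℤ) ^ 4 + 2 * q ^ 3 + 2 * q ^ 2 - 2 * q - 2 := by
  obtain ⟨h, rfl⟩ := hq
  have hcount := two_mul_card_evenPairBounded_four (2 * h + 1)
  rw [show (2 * h + 1) / 2 = h by omega, show 2 * h + 1 - h = h + 1 by omega,
    Int.negOnePow_odd _ ⟨h, by push_cast; ring⟩] at hcount
  push_cast at hcount ⊢
  linarith

lemma card_evenPairBounded_four_lt {n : ℕ} (hn : n ≠ 0) : #(evenPairBounded 4 n) < (n + 1) ^ 4 := by
  suffices (#(evenPairBounded 4 n) : ℤ) < ((n + 1 : ℕ) : ℤ) ^ 4 by exact_mod_cast this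
  rcases Nat.even_or_odd n with ⟨h, rfl⟩ | hodd
  · have hcount := two_mul_card_evenPairBounded_four (h + h)
    rw [show (h + h) / 2 = h by omega, show h + h - h = h by omega,
      Int.negOnePow_even _ ⟨h, by push_cast; ring⟩] at hcount
    have hh : (1 : ℤ) ≤ h := by exact_mod_cast Nat.one_le_iff_ne_zero.mpr (by omega)
    push_cast at hcount ⊢
    nlinarith [pow_pos (by positivity : (0 : ℤ) < h) 3]
  · rw [card_evenPairBounded_four_of_odd hodd]
    push_cast
    nlinarith [pow_pos (by positivity : (0 : ℤ) < n + 1) 3, sq_nonneg (n : ℤ)]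

lemma stdBasis_eq_single (n : ℕ) (i : Fin n) : stdBasis n i = Pi.single i 1 := by
  ext j; simp [stdBasis, Pi.single_apply]

lemma innerProd_eq_dotProduct {n : ℕ} (u v : Fin n → ℝ) : innerProd u v = u ⬝ᵥ v := rfl

lemma innerProd_smul_stdBasis_add_smul_stdBasis {n : ℕ} (u : Fin n → ℝ) (i j : Fin n) (ε δ : ℝ) :
    innerProd u (ε • stdBasis n i + δ • stdBasis n j) = ε * u i + δ * u j := by
  simp [innerProd_eq_dotProduct, stdBasis_eq_single, dotProduct_add]

lemma abs_innerProd_le_of_abs_eq_half (u v : Fin 4 → ℝ) (hv : ∀ i, v i = 1/2 ∨ v i = -1/2) :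
    |innerProd u v| ≤ ((|u 0| + |u 1|) + (|u 2| + |u 3|)) / 2 := by
  have habs : ∀ i, |u i * v i| = |u i| / 2 := fun i => by
    rcases hv i with h | h <;> simp [h, abs_mul, div_eq_mul_inv]
  calc |innerProd u v| ≤ ∑ i, |u i * v i| := abs_sum_le_sum_abs _ _
    _ = _ := by simp only [habs, Fin.sum_univ_four]; ring

lemma ite_nonneg_one_neg_one_mul_self (x : ℝ) : (if 0 ≤ x then 1 else -1) * x = |x| := by
  split_ifs with h
  · simp [abs_of_nonneg h]
  · simp [abs_of_neg (not_le.mp h)]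

lemma forall_typeF_abs_innerProd_le_iff (u : Fin 4 → ℝ) (r : ℝ) :
    (∀ v ∈ typeF, |innerProd u v| ≤ r) ↔ ∀ i j, i ≠ j → |u i| + |u j| ≤ r := by
  constructor
  · intro h
    have hlt : ∀ i j, i < j → |u i| + |u j| ≤ r := by
      intro i j hij
      have hmem : (if 0 ≤ u i then 1 else -1 : ℝ) • stdBasis 4 i
          + (if 0 ≤ u j then 1 else -1 : ℝ) • stdBasis 4 j ∈ typeF :=
        Or.inl <| Or.inr ⟨i, j, hij, _, _, by split_ifs <;> simp, by split_ifs <;> simp, rfl⟩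
      have hroot := h _ hmem
      rwa [innerProd_smul_stdBasis_add_smul_stdBasis, ite_nonneg_one_neg_one_mul_self,
        ite_nonneg_one_neg_one_mul_self, abs_of_nonneg (by positivity)] at hroot
    intro i j hij
    rcases hij.lt_or_gt with hij | hij
    · exact hlt i j hij
    · exact add_comm |u i| |u j| ▸ hlt j i hij
  · intro h v hv
    rcases hv with (⟨i, hv⟩ | ⟨i, j, hij, ε, δ, hε, hδ, rfl⟩) | hv
    · have hui : |innerProd u v| = |u i| := by
        rcases hv with rfl | rfl <;> simp [innerProd_eq_dotProduct, stdBasis_eq_single]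
      obtain ⟨j, hj⟩ := exists_ne i
      rw [hui]
      exact (le_add_of_nonneg_right (abs_nonneg _)).trans (h i j hj.symm)
    · have hε' : |ε| = 1 := by rcases hε with rfl | rfl <;> simp
      have hδ' : |δ| = 1 := by rcases hδ with rfl | rfl <;> simp
      calc |innerProd u (ε • stdBasis 4 i + δ • stdBasis 4 j)| = |ε * u i + δ * u j| := by
            rw [innerProd_smul_stdBasis_add_smul_stdBasis]
        _ ≤ |ε * u i| + |δ * u j| := abs_add_le _ _
        _ = |u i| + |u j| := by rw [abs_mul, abs_mul, hε', hδ', one_mul, one_mul]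
        _ ≤ r := h i j hij.ne
    · linarith [abs_innerProd_le_of_abs_eq_half u v hv, h 0 1 (by decide), h 2 3 (by decide)]

lemma mem_evenLattice_iff (u : Fin 4 → ℝ) :
    u ∈ evenLattice ↔ ∃ x : Fin 4 → ℤ, Even (∑ i, x i) ∧ (fun i => (x i : ℝ)) = u := by
  constructor
  · rintro ⟨hint, m, hm⟩
    choose x hx using hint
    refine ⟨x, ⟨m, ?_⟩, funext fun i => (hx i).symm⟩
    simp only [hx] at hm
    exact_mod_cast hm.trans (two_mul _)
  · rintro ⟨x, ⟨m, hm⟩, rfl⟩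
    exact ⟨fun i => ⟨x i, rfl⟩, m,
      (by exact_mod_cast hm.trans (two_mul m).symm : ∑ i, (x i : ℝ) = 2 * m)⟩

lemma ncard_evenLattice_typeF (n : ℕ) :
    {u | u ∈ evenLattice ∧ ∀ v ∈ typeF, |innerProd u v| ≤ (n : ℝ)}.ncard
      = #(evenPairBounded 4 n) := by
  have hset : {u | u ∈ evenLattice ∧ ∀ v ∈ typeF, |innerProd u v| ≤ (n : ℝ)}
      = (fun (x : Fin 4 → ℤ) i => (x i : ℝ)) '' evenPairBounded 4 n := by
    ext u
    simp only [Set.mem_ofPred_eq, mem_evenLattice_iff, forall_typeF_abs_innerProd_le_iff,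
      Set.mem_image, mem_coe, evenPairBounded, mem_filter, intCube, Fintype.mem_piFinset, mem_Icc]
    constructor
    · rintro ⟨⟨x, hx, rfl⟩, h⟩
      have hpair : ∀ i j, i ≠ j → |x i| + |x j| ≤ n := fun i j hij => by
        have hreal : |(x i : ℝ)| + |(x j : ℝ)| ≤ n := h i j hij
        exact_mod_cast hreal
      refine ⟨x, ⟨fun i => ?_, hx, hpair⟩, rfl⟩
      obtain ⟨j, hj⟩ := exists_ne i
      exact abs_le.mp (by linarith [hpair i j hj.symm, abs_nonneg (x j)])
    · rintro ⟨x, ⟨-, hx, hpair⟩, rfl⟩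
      exact ⟨⟨x, hx, rfl⟩, fun i j hij =>
        (by exact_mod_cast hpair i j hij : |(x i : ℝ)| + |(x j : ℝ)| ≤ n)⟩
  rw [hset, Set.ncard_image_of_injective _
    fun x y h => funext fun i => Int.cast_injective (congrFun h i), Set.ncard_coe_finset]

/-- Ehrhart count in type `F_4`, odd case: for every odd `q ≥ 1`, the number of points
`u` of the dual lattice `M` of the `F_4` root lattice with `|⟨u,v⟩| ≤ q` for all roots `v`
is `q⁴ + 2q³ + 2q² − 2q − 2`.  In particular, for every `q ≥ 2` the number of points of
`M` in the interior of the dilate `q·F` (equivalently, with `|⟨u,v⟩| ≤ q − 1` for all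
roots `v`) is strictly less than `q⁴`. -/
theorem typeF_ehrhart_odd :
    (∀ q : ℕ, Odd q →
      ({u | u ∈ evenLattice ∧ ∀ v ∈ typeF, |innerProd u v| ≤ (q : ℝ)}.ncard : ℤ)
        = (q : ℤ) ^ 4 + 2 * (q : ℤ) ^ 3 + 2 * (q : ℤ) ^ 2 - 2 * (q : ℤ) - 2) ∧
    ∀ q : ℕ, 2 ≤ q →
      {u | u ∈ evenLattice ∧ ∀ v ∈ typeF, |innerProd u v| ≤ (q : ℝ) - 1}.ncard < q ^ 4 := by
  refine ⟨fun q hq => ?_, fun q hq => ?_⟩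
  · rw [ncard_evenLattice_typeF]
    exact card_evenPairBounded_four_of_odd hq
  · obtain ⟨n, rfl⟩ : ∃ n, q = n + 1 := ⟨q - 1, by omega⟩
    rw [show ((n + 1 : ℕ) : ℝ) - 1 = n by push_cast; ring, ncard_evenLattice_typeF]
    exact card_evenPairBounded_four_lt (by omega)
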